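/- (Deterministic form of Lemma 3.3(v)b) Suppose α_P^high > α_A^low > 0. Then the supremum of F(a,z,γ,δ,α_P^high,α_A^low) over all deterministic actions a, all z ∈ ℝ, all δ ∈ ℝ, and all γ with γ > R_A z², equals G(a*, z*, α_P^high). -/

import Mathlib

open MeasureTheory

/-- The objective `F(a,z,γ,δ,α_P,α_A)` from the first-best problem. -/
noncomputable def Fobj (R_A R_P ρ T : ℝ) (k a : ℝ → ℝ) (z γ δ αP αA : ℝ) : ℝ :=
  -Real.exp (R_P * (δ - (1 - z) * (∫ s in (0:ℝ)..T, a s)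
      + (R_P * (1 - z) ^ 2 / 2 + γ / 2) * αP * T))
  - ρ * Real.exp (R_A * ((∫ s in (0:ℝ)..T, k (a s))
      - z * (∫ s in (0:ℝ)..T, a s) - δ + (R_A * z ^ 2 / 2 - γ / 2) * αA * T))

/-- The quantity `G(a,z,γ,α_P,α_A)`. -/
noncomputable def Gobj (R_A R_P ρ T : ℝ) (k a : ℝ → ℝ) (z γ αP αA : ℝ) : ℝ :=
  -(ρ ^ (R_P / (R_A + R_P)) * ((R_A + R_P) / R_P)
      * (R_A / R_P) ^ (-(R_A / (R_A + R_P)))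
      * Real.exp ((R_A * R_P / (R_A + R_P)) * ((∫ s in (0:ℝ)..T, (k (a s) - a s))
          + γ / 2 * T * (αP - αA)
          + T / 2 * (αP * R_P * (1 - z) ^ 2 + αA * R_A * z ^ 2))))

/-- A deterministic action: a measurable map `[0,T] → [0, a_max]`. -/
def IsAction (T aMax : ℝ) (a : ℝ → ℝ) : Prop :=
  Measurable a ∧ ∀ s ∈ Set.Icc (0 : ℝ) T, a s ∈ Set.Icc (0 : ℝ) aMax

/-!
For fixed `(a, z, γ)`, `F` has the form `-exp (R_P (δ + u)) - ρ exp (R_A (v - δ))`, whose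
maximum over `δ` is `G(a, z, γ, α_P, α_A)`. `G` is decreasing in its exponent, which is at least
`T (k a* - a*) + (γ - R_A z²) T (α_P - α_A) / 2 + α_P T (R_P (1 - z)² + R_A z²) / 2`;
this bound is minimised by `a = a*`, `z = z*`, and, since `α_P > α_A`, by letting
`γ ↓ R_A z*²`. At `γ = R_A z²` the exponent of `G` is that of `G(a, z, α_P)`, so the supremum
is approached along `γ ↓ R_A z*²` but not attained.
-/

open Real Filter

lemma exp_mul_one_add_sub_le_exp (x y : ℝ) : exp y * (1 + (x - y)) ≤ exp x := by
  calc exp y * (1 + (x - y)) ≤ exp y * exp (x - y) := by gcongr; linarith [add_one_le_exp (x - y)]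
    _ = exp x := by rw [← exp_add, add_sub_cancel]

lemma isGreatest_neg_exp_sub_mul_exp {p q ρ : ℝ} (hp : 0 < p) (hq : 0 < q) (hρ : 0 < ρ)
    (u v : ℝ) :
    IsGreatest (Set.range fun δ => -exp (q * (δ + u)) - ρ * exp (p * (v - δ)))
      (-(ρ ^ (q / (p + q)) * ((p + q) / q) * (p / q) ^ (-(p / (p + q)))
        * exp (p * q / (p + q) * (u + v)))) := by
  set L := log (ρ * (p / q)) with hL
  -- `δ₀` solves the first-order condition `hY`; the tangent lines of `exp` at `δ₀` then bound
  -- the objective everywhere by its value at `δ₀`.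
  set δ₀ := (L + p * v - q * u) / (p + q) with hδ₀
  set X := exp (q * (δ₀ + u)) with hXdef
  have hX :
      X = ρ ^ (q / (p + q)) * (p / q) ^ (q / (p + q)) * exp (p * q / (p + q) * (u + v)) := by
    rw [← mul_rpow hρ.le (by positivity), rpow_def_of_pos (by positivity), ← exp_add, hXdef,
      ← hL]
    congr 1
    rw [hδ₀]
    field_simp
    ring
  have hY : ρ * exp (p * (v - δ₀)) = q / p * X := by
    rw [show p * (v - δ₀) = q * (δ₀ + u) - L by rw [hδ₀]; field_simp; ring, exp_sub,
      exp_log (by positivity), ← hXdef]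
    field_simp
  have hmax : -X - ρ * exp (p * (v - δ₀)) = -(ρ ^ (q / (p + q)) * ((p + q) / q)
      * (p / q) ^ (-(p / (p + q))) * exp (p * q / (p + q) * (u + v))) := by
    rw [hY, hX, show -(p / (p + q)) = q / (p + q) - 1 by field_simp; ring,
      rpow_sub_one (by positivity)]
    field_simp
    ring
  refine ⟨⟨δ₀, hmax⟩, ?_⟩
  rintro _ ⟨δ, rfl⟩
  have h₁ := exp_mul_one_add_sub_le_exp (q * (δ + u)) (q * (δ₀ + u))
  have h₂ := mul_le_mul_of_nonneg_left
    (exp_mul_one_add_sub_le_exp (p * (v - δ)) (p * (v - δ₀))) hρ.le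
  rw [← hXdef] at h₁
  rw [← mul_assoc, hY] at h₂
  have hlin :
      q / p * X * (1 + (p * (v - δ) - p * (v - δ₀))) = q / p * X - q * X * (δ - δ₀) := by
    field_simp
    ring
  rw [← hmax]
  linarith

lemma isGreatest_range_Fobj {R_A R_P ρ T : ℝ} (hRA : 0 < R_A) (hRP : 0 < R_P) (hρ : 0 < ρ)
    {k a : ℝ → ℝ} (hka : IntervalIntegrable (fun s => k (a s)) volume 0 T)
    (ha : IntervalIntegrable a volume 0 T) (z γ αP αA : ℝ) :
    IsGreatest (Set.range fun δ => Fobj R_A R_P ρ T k a z γ δ αP αA)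
      (Gobj R_A R_P ρ T k a z γ αP αA) := by
  convert isGreatest_neg_exp_sub_mul_exp hRA hRP hρ
    (-(1 - z) * (∫ s in (0:ℝ)..T, a s) + (R_P * (1 - z) ^ 2 / 2 + γ / 2) * αP * T)
    ((∫ s in (0:ℝ)..T, k (a s)) - z * (∫ s in (0:ℝ)..T, a s)
      + (R_A * z ^ 2 / 2 - γ / 2) * αA * T) using 2
  · ext δ
    simp only [Fobj]
    ring_nf
  · rw [Gobj, intervalIntegral.integral_sub hka ha]
    ring_nf

lemma Gobj_RA_mul_sq_eq {R_A R_P ρ T : ℝ} (k a : ℝ → ℝ) (z αP αA : ℝ) :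
    Gobj R_A R_P ρ T k a z (R_A * z ^ 2) αP αA = Gobj R_A R_P ρ T k a z 0 αP αP := by
  simp only [Gobj]
  ring_nf

lemma continuous_Gobj_gamma (R_A R_P ρ T : ℝ) (k a : ℝ → ℝ) (z αP αA : ℝ) :
    Continuous fun γ => Gobj R_A R_P ρ T k a z γ αP αA := by
  unfold Gobj
  fun_prop

lemma weighted_sq_add_sq_ge {p q : ℝ} (hpq : 0 < p + q) (z : ℝ) :
    q * (1 - q / (p + q)) ^ 2 + p * (q / (p + q)) ^ 2 ≤ q * (1 - z) ^ 2 + p * z ^ 2 := by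
  have hdiff : q * (1 - z) ^ 2 + p * z ^ 2 - (q * (1 - q / (p + q)) ^ 2 + p * (q / (p + q)) ^ 2)
      = (p + q) * (z - q / (p + q)) ^ 2 := by
    field_simp
    ring
  linarith [mul_nonneg hpq.le (sq_nonneg (z - q / (p + q)))]

lemma IsAction.intervalIntegrable_comp {T aMax : ℝ} {a : ℝ → ℝ} (ha : IsAction T aMax a)
    (hT : 0 ≤ T) {g : ℝ → ℝ} (hg : Continuous g) :
    IntervalIntegrable (fun s => g (a s)) volume 0 T := by
  rw [intervalIntegrable_iff_integrableOn_Icc_of_le hT]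
  obtain ⟨M, hM⟩ :=
    isCompact_Icc.exists_bound_of_continuousOn hg.continuousOn (s := Set.Icc 0 aMax)
  refine Measure.integrableOn_of_bounded (M := M) measure_Icc_lt_top.ne
    (hg.measurable.comp ha.1).aestronglyMeasurable ?_
  rw [ae_restrict_iff' measurableSet_Icc]
  exact Eventually.of_forall fun s hs => hM _ (ha.2 s hs)

lemma IsAction.mul_le_integral_comp {T aMax : ℝ} {a : ℝ → ℝ} (ha : IsAction T aMax a)
    (hT : 0 ≤ T) {g : ℝ → ℝ} (hg : Continuous g) {m : ℝ}
    (hm : ∀ x ∈ Set.Icc 0 aMax, m ≤ g x) :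
    T * m ≤ ∫ s in (0:ℝ)..T, g (a s) := by
  calc T * m = ∫ _ in (0:ℝ)..T, m := by simp
    _ ≤ ∫ s in (0:ℝ)..T, g (a s) :=
      intervalIntegral.integral_mono_on hT intervalIntegrable_const
        (ha.intervalIntegrable_comp hT hg) fun s hs => hm _ (ha.2 s hs)

lemma IsAction.Gobj_le_Gobj_astar {R_A R_P ρ T aMax : ℝ}
    (hRA : 0 < R_A) (hRP : 0 < R_P) (hρ : 0 < ρ) (hT : 0 ≤ T) {k a : ℝ → ℝ}
    (hk : Continuous k) (ha : IsAction T aMax a) {astar : ℝ}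
    (hastar_min : ∀ x ∈ Set.Icc (0 : ℝ) aMax, k astar - astar ≤ k x - x)
    {z γ αP αA : ℝ} (hγ : R_A * z ^ 2 ≤ γ) (hαP : 0 ≤ αP) (hαA : αA ≤ αP) :
    Gobj R_A R_P ρ T k a z γ αP αA
      ≤ Gobj R_A R_P ρ T k (fun _ => astar) (R_P / (R_A + R_P)) 0 αP αP := by
  have hint := ha.mul_le_integral_comp hT (g := fun x => k x - x) (by fun_prop) hastar_min
  have hquad := mul_le_mul_of_nonneg_left (weighted_sq_add_sq_ge (add_pos hRA hRP) z)
    (mul_nonneg hT hαP)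
  have hγ' : 0 ≤ T * ((γ - R_A * z ^ 2) * (αP - αA)) :=
    mul_nonneg hT (mul_nonneg (sub_nonneg.mpr hγ) (sub_nonneg.mpr hαA))
  unfold Gobj
  refine neg_le_neg (mul_le_mul_of_nonneg_left (exp_le_exp.mpr
    (mul_le_mul_of_nonneg_left ?_ (by positivity))) (by positivity))
  rw [intervalIntegral.integral_const, smul_eq_mul, sub_zero]
  linarith

theorem sup_Q_gamma_high_general (R_A R_P ρ T aMax : ℝ) (k : ℝ → ℝ)
    (hRA : 0 < R_A) (hRP : 0 < R_P) (hρ : 0 < ρ) (hT : 0 < T)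
    (hkcont : Continuous k)
    (astar : ℝ) (hastar_mem : astar ∈ Set.Icc (0 : ℝ) aMax)
    (hastar_min : ∀ x ∈ Set.Icc (0 : ℝ) aMax, k astar - astar ≤ k x - x)
    (αPhigh αAlow : ℝ) (hαA : 0 < αAlow) (hlt : αAlow < αPhigh) :
    IsLUB {x : ℝ | ∃ a z γ δ, IsAction T aMax a ∧ R_A * z ^ 2 < γ ∧
        x = Fobj R_A R_P ρ T k a z γ δ αPhigh αAlow}
      (Gobj R_A R_P ρ T k (fun _ => astar) (R_P / (R_A + R_P)) 0 αPhigh αPhigh) := by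
  have isGreatest_δ {a : ℝ → ℝ} (ha : IsAction T aMax a) (z γ : ℝ) :=
    isGreatest_range_Fobj hRA hRP hρ (ha.intervalIntegrable_comp hT.le hkcont)
      (ha.intervalIntegrable_comp hT.le continuous_id) z γ αPhigh αAlow
  constructor
  · rintro _ ⟨a, z, γ, δ, ha, hγ, rfl⟩
    exact ((isGreatest_δ ha z γ).2 ⟨δ, rfl⟩).trans
      (ha.Gobj_le_Gobj_astar hRA hRP hρ hT.le hkcont hastar_min hγ.le (hαA.trans hlt).le
        hlt.le)
  · intro v hv
    set zstar := R_P / (R_A + R_P)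
    have hastar : IsAction T aMax fun _ => astar := ⟨measurable_const, fun _ _ => hastar_mem⟩
    have hle : ∀ γ ∈ Set.Ioi (R_A * zstar ^ 2),
        Gobj R_A R_P ρ T k (fun _ => astar) zstar γ αPhigh αAlow ≤ v := fun γ hγ => by
      obtain ⟨δ, hδ⟩ := (isGreatest_δ hastar zstar γ).1
      exact hv ⟨_, zstar, γ, δ, hastar, hγ, hδ.symm⟩
    rw [← Gobj_RA_mul_sq_eq]
    exact le_of_tendsto ((continuous_Gobj_gamma _ _ _ _ _ _ _ _ _).continuousWithinAt
      (s := Set.Ioi _)) (eventually_nhdsWithin_of_forall hle)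

/-- Lemma 3.3(v)b: if `α_P^high > α_A^low`, the supremum of `F` over deterministic
actions, `z`, `δ` and `γ > R_A z²` equals `G(a*, z*, α_P^high)`. -/
theorem sup_Q_gamma_high (R_A R_P ρ T aMax : ℝ) (k : ℝ → ℝ)
    (hRA : 0 < R_A) (hRP : 0 < R_P) (hρ : 0 < ρ) (hT : 0 < T) (haMax : 0 < aMax)
    (hkcont : Continuous k) (hkconv : StrictConvexOn ℝ Set.univ k) (hkmono : StrictMono k)
    (astar : ℝ) (hastar_mem : astar ∈ Set.Icc (0 : ℝ) aMax)
    (hastar_min : ∀ x ∈ Set.Icc (0 : ℝ) aMax, k astar - astar ≤ k x - x)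
    (αPhigh αAlow : ℝ) (hαA : 0 < αAlow) (hlt : αAlow < αPhigh) :
    IsLUB {x : ℝ | ∃ a z γ δ, IsAction T aMax a ∧ R_A * z ^ 2 < γ ∧
        x = Fobj R_A R_P ρ T k a z γ δ αPhigh αAlow}
      (Gobj R_A R_P ρ T k (fun _ => astar) (R_P / (R_A + R_P)) 0 αPhigh αPhigh) :=
  sup_Q_gamma_high_general R_A R_P ρ T aMax k hRA hRP hρ hT hkcont astar hastar_mem hastar_min
    αPhigh αAlow hαA hlt
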